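/- Let G(t, σ, Z₀₀, Z₀₁, Z₁₀, Z₀₂, Z₁₁, Z₂₀) = Im{(1 + i(f₁(t) + 2Z₀₀ + Z₁₀))^{n−1}·[σ²(f₁'(t) + 2Z₀₁ + Z₁₁)² + (1 + i(f₀''(t) + ½(f₁''(t) + Z₀₂)σ²))·(1 + i(f₁(t) + 2Z₀₀ + 4Z₁₀ + Z₂₀))]}, where f₀ is real-analytic with f₀(0) = f₀'(0) = f₀''(0) = 0 and f₁ = −tan(arctan(f₀'')/n). Then at the base point: (1) G(t, 0,0,0,0,0,0,0) = 0 for all t; (2) the partial derivatives of G with respect to Z₀₁, Z₁₁, Z₀₂ vanish identically at (t, 0,…,0); (3) ∂G/∂Z₂₀ at (0, 0,…,0) equals 1; (4) ∂G/∂Z₁₀ at (0,0,…,0) equals n+3 and ∂G/∂Z₀₀ at (0,0,…,0) equals 2n; hence k² + (n+3)k + 2n ≠ 0 for every integer k > 0. -/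

import Mathlib

/-!
Writing `1 + i tan θ = e^{iθ} / cos θ`, the choice `f₁ = tan (-arctan (f₀'') / n)` makes the
arguments of `(1 + i f₁)ⁿ` and `1 + i f₀''` cancel, so `G(t, 0) = 0`. At `σ = 0` the function `G`
no longer involves `Z₀₁`, `Z₁₁`, `Z₀₂`; at `t = 0` moreover `f₁(0) = f₀''(0) = 0`, so along a line
through the origin `G` is `Im ((1 + i a z)ⁿ⁻¹ (1 + i c z))`, with derivative `(n - 1) a + c` at `0`.
-/

/-- The Gérard–Tahara function G(t,σ,Z₀₀,Z₀₁,Z₁₀,Z₀₂,Z₁₁,Z₂₀) for the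
SO(n)-invariant special Lagrangian reduction equation. -/
noncomputable def Gfun (n : ℕ) (f0 f1 : ℝ → ℝ)
    (t σ Z00 Z01 Z10 Z02 Z11 Z20 : ℝ) : ℝ :=
  (((1 : ℂ) + Complex.I * (f1 t + 2*Z00 + Z10)) ^ (n-1) *
    (((σ^2 * (deriv f1 t + 2*Z01 + Z11)^2 : ℝ) : ℂ) +
      (1 + Complex.I * (deriv (deriv f0) t + (1/2) * (deriv (deriv f1) t + Z02) * σ^2)) *
      (1 + Complex.I * (f1 t + 2*Z00 + 4*Z10 + Z20)))).im

open Complex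

lemma one_add_I_mul_tan (θ : ℝ) (h : Real.cos θ ≠ 0) :
    1 + I * Real.tan θ = exp (θ * I) / Real.cos θ := by
  have h' : cos θ ≠ 0 := by exact_mod_cast h
  rw [exp_mul_I, Real.tan_eq_sin_div_cos]
  push_cast
  field_simp

lemma im_one_add_I_mul_tan_pow_mul_eq_zero (n : ℕ) {θ φ : ℝ} (hθ : Real.cos θ ≠ 0)
    (hφ : Real.cos φ ≠ 0) (h : n * θ + φ = 0) :
    ((1 + I * Real.tan θ) ^ n * (1 + I * Real.tan φ)).im = 0 := by
  have hexp : n * (θ * I) + φ * I = 0 := by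
    have h' : ((n * θ + φ : ℝ) : ℂ) * I = 0 := by rw [h]; simp
    push_cast at h'
    linear_combination h'
  rw [one_add_I_mul_tan θ hθ, one_add_I_mul_tan φ hφ, div_pow, ← exp_nat_mul,
    div_mul_div_comm, ← exp_add, hexp, exp_zero]
  norm_cast

lemma cos_arctan_div_ne_zero (b : ℝ) {n : ℕ} (hn : 1 ≤ n) :
    Real.cos (Real.arctan b / n) ≠ 0 := by
  have hn' : (1 : ℝ) ≤ n := by exact_mod_cast hn
  have hlo := Real.neg_pi_div_two_lt_arctan b
  have hhi := Real.arctan_lt_pi_div_two b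
  refine (Real.cos_pos_of_mem_Ioo ⟨?_, ?_⟩).ne'
  · rw [lt_div_iff₀ (by positivity)]
    nlinarith [Real.pi_pos]
  · rw [div_lt_iff₀ (by positivity)]
    nlinarith [Real.pi_pos]

lemma im_one_add_I_mul_neg_tan_arctan_div_pow_mul_eq_zero {n : ℕ} (hn : 1 ≤ n) (b : ℝ) :
    ((1 + I * (-Real.tan (Real.arctan b / n) : ℝ)) ^ n * (1 + I * b)).im = 0 := by
  have h := im_one_add_I_mul_tan_pow_mul_eq_zero n (θ := -(Real.arctan b / n))
    (φ := Real.arctan b) (by rw [Real.cos_neg]; exact cos_arctan_div_ne_zero b hn)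
    (Real.cos_arctan_pos b).ne' (by field_simp; ring)
  rwa [Real.tan_neg, Real.tan_arctan] at h

lemma hasDerivAt_one_add_I_mul_ofReal (a x : ℝ) :
    HasDerivAt (fun z : ℝ => (1 : ℂ) + I * (a * z : ℝ)) (I * a) x := by
  simpa using (((hasDerivAt_id x).const_mul a).ofReal_comp.const_mul I).const_add 1

lemma hasDerivAt_im_one_add_I_mul_pow_mul (m : ℕ) (a c : ℝ) :
    HasDerivAt (fun z : ℝ => (((1 : ℂ) + I * (a * z : ℝ)) ^ m * (1 + I * (c * z : ℝ))).im)
      (m * a + c) 0 := by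
  have h := ((hasDerivAt_one_add_I_mul_ofReal a 0).fun_pow m).fun_mul
    (hasDerivAt_one_add_I_mul_ofReal c 0)
  exact (imCLM.hasFDerivAt.comp_hasDerivAt 0 h).congr_deriv (by simp)

lemma Gfun_sigma_zero (n : ℕ) (f0 f1 : ℝ → ℝ) (t Z00 Z01 Z10 Z02 Z11 Z20 : ℝ) :
    Gfun n f0 f1 t 0 Z00 Z01 Z10 Z02 Z11 Z20 =
      (((1 : ℂ) + I * (f1 t + 2 * Z00 + Z10)) ^ (n - 1) * (1 + I * deriv (deriv f0) t) *
        (1 + I * (f1 t + 2 * Z00 + 4 * Z10 + Z20))).im := by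
  simp only [Gfun]
  congr 1
  push_cast
  ring

lemma hasDerivAt_Gfun_line_at_origin (n : ℕ) {f0 f1 : ℝ → ℝ} (h1 : f1 0 = 0)
    (h2 : deriv (deriv f0) 0 = 0) (p q r : ℝ) :
    HasDerivAt (fun z => Gfun n f0 f1 0 0 (p * z) 0 (q * z) 0 0 (r * z))
      ((n - 1 : ℕ) * (2 * p + q) + (2 * p + 4 * q + r)) 0 := by
  convert hasDerivAt_im_one_add_I_mul_pow_mul (n - 1) (2 * p + q) (2 * p + 4 * q + r) using 2
    with z
  rw [Gfun_sigma_zero, h1, h2]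
  push_cast
  ring_nf

theorem stmt18_general (n : ℕ) (hn : 1 ≤ n) (f0 f1 : ℝ → ℝ) (h02 : deriv (deriv f0) 0 = 0)
    (hf1 : ∀ t, f1 t = -Real.tan (Real.arctan (deriv (deriv f0) t) / n)) :
    (∀ t, Gfun n f0 f1 t 0 0 0 0 0 0 0 = 0) ∧
    (∀ t, deriv (fun z => Gfun n f0 f1 t 0 0 z 0 0 0 0) 0 = 0 ∧
          deriv (fun z => Gfun n f0 f1 t 0 0 0 0 0 z 0) 0 = 0 ∧
          deriv (fun z => Gfun n f0 f1 t 0 0 0 0 z 0 0) 0 = 0) ∧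
    (deriv (fun z => Gfun n f0 f1 0 0 0 0 0 0 0 z) 0 = 1) ∧
    (deriv (fun z => Gfun n f0 f1 0 0 0 0 z 0 0 0) 0 = n + 3) ∧
    (deriv (fun z => Gfun n f0 f1 0 0 z 0 0 0 0 0) 0 = 2 * n) ∧
    (∀ k : ℕ, 0 < k → (k : ℝ)^2 + (n + 3) * (k : ℝ) + 2 * n ≠ 0) := by
  have hf10 : f1 0 = 0 := by simp [hf1, h02]
  have hn' : ((n - 1 : ℕ) : ℝ) = n - 1 := by rw [Nat.cast_sub hn, Nat.cast_one]
  refine ⟨fun t => ?_, fun t => ?_, ?_, ?_, ?_, fun k _ => ?_⟩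
  · have key := im_one_add_I_mul_neg_tan_arctan_div_pow_mul_eq_zero hn (deriv (deriv f0) t)
    rw [← hf1, ← Nat.sub_add_cancel hn, pow_succ] at key
    rw [Gfun_sigma_zero]
    convert key using 2
    push_cast
    ring
  · simp [Gfun_sigma_zero]
  · simpa using (hasDerivAt_Gfun_line_at_origin n hf10 h02 0 0 1).deriv
  · have h := (hasDerivAt_Gfun_line_at_origin n hf10 h02 0 1 0).deriv
    simp only [zero_mul, one_mul] at h
    rw [h, hn']
    ring
  · have h := (hasDerivAt_Gfun_line_at_origin n hf10 h02 1 0 0).deriv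
    simp only [zero_mul, one_mul] at h
    rw [h, hn']
    ring
  · positivity

/-- with f₀ real-analytic, f₀(0) = f₀'(0) = f₀''(0) = 0 and
f₁ = −tan(arctan(f₀'')/n), the function G satisfies the four Gérard–Tahara
hypotheses: (1) G(t,0) ≡ 0; (2) ∂G/∂Z₀₁, ∂G/∂Z₁₁, ∂G/∂Z₀₂ vanish at (t,0);
(3) ∂G/∂Z₂₀(0,0) = 1; (4) ∂G/∂Z₁₀(0,0) = n+3 and ∂G/∂Z₀₀(0,0) = 2n, whence
k² + (n+3)k + 2n ≠ 0 for every integer k > 0. -/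
theorem stmt18 (n : ℕ) (hn : 1 ≤ n) (f0 f1 : ℝ → ℝ) (s : Set ℝ)
    (hs : IsOpen s) (h0s : (0:ℝ) ∈ s) (han : AnalyticOn ℝ f0 s)
    (h00 : f0 0 = 0) (h01 : deriv f0 0 = 0) (h02 : deriv (deriv f0) 0 = 0)
    (hf1 : ∀ t, f1 t = -Real.tan (Real.arctan (deriv (deriv f0) t) / n)) :
    (∀ t, Gfun n f0 f1 t 0 0 0 0 0 0 0 = 0) ∧
    (∀ t, deriv (fun z => Gfun n f0 f1 t 0 0 z 0 0 0 0) 0 = 0 ∧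
          deriv (fun z => Gfun n f0 f1 t 0 0 0 0 0 z 0) 0 = 0 ∧
          deriv (fun z => Gfun n f0 f1 t 0 0 0 0 z 0 0) 0 = 0) ∧
    (deriv (fun z => Gfun n f0 f1 0 0 0 0 0 0 0 z) 0 = 1) ∧
    (deriv (fun z => Gfun n f0 f1 0 0 0 0 z 0 0 0) 0 = n + 3) ∧
    (deriv (fun z => Gfun n f0 f1 0 0 z 0 0 0 0 0) 0 = 2 * n) ∧
    (∀ k : ℕ, 0 < k → (k : ℝ)^2 + (n + 3) * (k : ℝ) + 2 * n ≠ 0) :=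
  stmt18_general n hn f0 f1 h02 hf1
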